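/- For every integer n ≥ 1 the matrix C_n is symmetric, i.e. c^{(n)}_{i,j} = c^{(n)}_{j,i} for all i, j ∈ {1, …, n}. -/

import Mathlib

/-!
The block of `C_{n+2}` to be shown symmetric is `τ C_{n+1}`. Its last row and column consist
of ones. On the rest, symmetry of `C_{n+1}` lets the tail sum over a column be read as a tail
sum along a row of `C_{n+1} = τ C_n ⊕ (1)`, so `(τ C_{n+1})_{i,j}` is the double sum of
`C_n` over the rectangle `[i-1, n] × [j-1, n]`, which is symmetric in `i, j` because `C_n` is.
-/

/-- The entries `c^{(n)}_{i,j}` of the matrices `C_n`, defined by `C_1 = (1)` and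
`C_{n+1} = (τ C_n) ⊕ (1)`, where `(τ A)_{i,j} = Σ_{s=i-1}^{n} a_{s,j}` (with the
convention `a_{0,j} = 0`). Entries with an index outside `{1, …, n}` are `0`. -/
def cMat : ℕ → ℕ → ℕ → ℕ
  | 0, _, _ => 0
  | 1, i, j => if i = 1 ∧ j = 1 then 1 else 0
  | n + 2, i, j =>
      if 1 ≤ i ∧ i ≤ n + 1 ∧ 1 ≤ j ∧ j ≤ n + 1 then
        ∑ s ∈ Finset.Icc (i - 1) (n + 1), cMat (n + 1) s j
      else if i = n + 2 ∧ j = n + 2 then 1 else 0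

open Finset

/-- `(τ C_n)_{i,j}`, for `1 ≤ i`. -/
def tauCMat (n i j : ℕ) : ℕ := ∑ s ∈ Icc (i - 1) n, cMat n s j

lemma cMat_eq_zero_of_col_outside (n i : ℕ) {j : ℕ} (hj : j = 0 ∨ n < j) : cMat n i j = 0 := by
  match n with
  | 0 => rfl
  | 1 => rw [cMat]; split_ifs <;> omega
  | n + 2 => rw [cMat]; split_ifs <;> omega

lemma cMat_col_self {n : ℕ} (hn : 1 ≤ n) (s : ℕ) : cMat n s n = if s = n then 1 else 0 := by
  match n, hn with
  | 1, _ => simp [cMat]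
  | n + 2, _ => rw [cMat]; split_ifs <;> omega

lemma cMat_row_self {n : ℕ} (hn : 1 ≤ n) (j : ℕ) : cMat n n j = if j = n then 1 else 0 := by
  match n, hn with
  | 1, _ => simp [cMat]
  | n + 2, _ => rw [cMat]; split_ifs <;> omega

lemma tauCMat_eq_zero_of_col_outside (n i : ℕ) {j : ℕ} (hj : j = 0 ∨ n < j) : tauCMat n i j = 0 :=
  sum_eq_zero fun s _ => cMat_eq_zero_of_col_outside n s hj

lemma cMat_succ_eq_tauCMat {n i : ℕ} (hi : 1 ≤ i) (hin : i ≤ n) (j : ℕ) :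
    cMat (n + 1) i j = tauCMat n i j := by
  obtain ⟨n, rfl⟩ : ∃ k, n = k + 1 := ⟨n - 1, by omega⟩
  by_cases hj : 1 ≤ j ∧ j ≤ n + 1
  · rw [cMat, if_pos ⟨hi, hin, hj⟩, tauCMat]
  · rw [cMat, tauCMat_eq_zero_of_col_outside _ _ (by omega)]
    split_ifs <;> omega

lemma tauCMat_col_self {n i : ℕ} (hn : 1 ≤ n) (hi : i ≤ n + 1) : tauCMat n i n = 1 := by
  simp only [tauCMat, cMat_col_self hn, sum_ite_eq', mem_Icc]
  rw [if_pos (by omega)]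

lemma tauCMat_row_self {n j : ℕ} (hj : 1 ≤ j) (hjn : j ≤ n) : tauCMat n n j = 1 := by
  induction n, hjn.trans' hj using Nat.le_induction generalizing j with
  | base =>
    obtain rfl : j = 1 := by omega
    decide
  | succ n hn ih =>
    rw [tauCMat, Nat.add_sub_cancel, sum_Icc_succ_top n.le_succ, Icc_self, sum_singleton,
      cMat_row_self (by omega)]
    rcases hjn.lt_or_eq with hj' | rfl
    · rw [cMat_succ_eq_tauCMat hn le_rfl, ih hj (by omega), if_neg (by omega)]
    · rw [cMat_col_self (by omega), if_neg (by omega), if_pos rfl]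

section

variable {n : ℕ} (symm : ∀ i j, cMat n i j = cMat n j i)
  (symm_succ : ∀ i j, cMat (n + 1) i j = cMat (n + 1) j i)

include symm_succ in
lemma tauCMat_succ_eq_sum_sum {i j : ℕ} (hi : i ≤ n + 2) (hj : 1 ≤ j) (hjn : j ≤ n) :
    tauCMat (n + 1) i j = ∑ s ∈ Icc (i - 1) n, ∑ t ∈ Icc (j - 1) n, cMat n t s := by
  calc tauCMat (n + 1) i j
      = ∑ s ∈ Icc (i - 1) (n + 1), tauCMat n j s := by
        refine sum_congr rfl fun s _ => ?_
        rw [symm_succ, cMat_succ_eq_tauCMat hj hjn]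
    _ = ∑ s ∈ Icc (i - 1) n, tauCMat n j s := by
        rw [sum_Icc_succ_top (by omega), tauCMat_eq_zero_of_col_outside _ _ (by omega), add_zero]

include symm symm_succ in
lemma tauCMat_succ_comm {i j : ℕ} (hi : 1 ≤ i) (hin : i ≤ n + 1) (hj : 1 ≤ j) (hjn : j ≤ n + 1) :
    tauCMat (n + 1) i j = tauCMat (n + 1) j i := by
  rcases hin.lt_or_eq with hin | rfl
  · rcases hjn.lt_or_eq with hjn | rfl
    · rw [tauCMat_succ_eq_sum_sum symm_succ (by omega) hj (by omega),
        tauCMat_succ_eq_sum_sum symm_succ (by omega) hi (by omega), sum_comm]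
      simp only [symm]
    · rw [tauCMat_col_self (by omega) (by omega), tauCMat_row_self hi hin.le]
  · rw [tauCMat_col_self (by omega) (by omega), tauCMat_row_self hj hjn]

include symm symm_succ in
lemma cMat_add_two_comm (i j : ℕ) : cMat (n + 2) i j = cMat (n + 2) j i := by
  by_cases h : 1 ≤ i ∧ i ≤ n + 1 ∧ 1 ≤ j ∧ j ≤ n + 1
  · rw [cMat_succ_eq_tauCMat h.1 h.2.1, cMat_succ_eq_tauCMat h.2.2.1 h.2.2.2]
    exact tauCMat_succ_comm symm symm_succ h.1 h.2.1 h.2.2.1 h.2.2.2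
  · simp only [cMat]
    split_ifs <;> omega

end

theorem cMat_symm (n : ℕ) (i j : ℕ) :
    cMat n i j = cMat n j i := by
  induction n using Nat.twoStepInduction generalizing i j with
  | zero => rfl
  | one => simp only [cMat, and_comm]
  | more n ih ih_succ => exact cMat_add_two_comm ih ih_succ i j
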